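/- Integrated Gradients can fail average weak pairwise monotonicity for a nonzero baseline: the model f(x_1, x_2) = 4.5 x_1 − x_1² + 4 x_2 − x_2² is weakly pairwise monotonic with respect to x_1 over x_2 on [0, 2]², and at explicand x = (2, 2) with baseline x' = (1, 0) one has IG_1((2,2), (1,0), f) = 1.5 and IG_2((2,2), (1,0), f) = 4, so that IG_1/(2 − 1) = 1.5 < 2 = IG_2/(2 − 0); in particular the average weak pairwise monotonicity inequality IG_β(x, x', f)/(x_β − x'_β) ≥ IG_γ(x, x', f)/(x_γ − x'_γ) fails at an explicand with x_1 = x_2. -/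

import Mathlib

/-!
The model splits as `f x₁ x₂ = f₁ x₁ + f₂ x₂`, so each partial derivative depends only on its
own coordinate and each Integrated Gradients attribution collapses, by the fundamental theorem
of calculus along the straight path, to a one-variable difference: `f₁ 2 - f₁ 1 = 1.5` and
`f₂ 2 - f₂ 0 = 4`. Weak pairwise monotonicity holds because `f₁ - f₂` is `s ↦ s / 2`, which makes
`f (a + c) a - f a (a + c) = c / 2`.
-/

noncomputable def f (a b : ℝ) : ℝ := 4.5 * a - a ^ 2 + 4 * b - b ^ 2

open intervalIntegral

/-- One-dimensional completeness of Integrated Gradients. -/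
theorem sub_mul_integral_deriv_comp_segment {g : ℝ → ℝ} (hg : ContDiff ℝ 1 g) (x x' : ℝ) :
    (x - x') * ∫ t in (0:ℝ)..1, deriv g (x' + t * (x - x')) = g x - g x' := by
  simp_rw [mul_comm _ (x - x'), mul_integral_comp_add_mul, mul_zero, mul_one, add_zero,
    add_sub_cancel]
  exact integral_deriv_eq_sub (fun y _ => hg.differentiable one_ne_zero y)
    ((hg.continuous_deriv le_rfl).intervalIntegrable _ _)

noncomputable def f₁ (s : ℝ) : ℝ := 4.5 * s - s ^ 2

noncomputable def f₂ (s : ℝ) : ℝ := 4 * s - s ^ 2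

theorem contDiff_f₁ : ContDiff ℝ 1 f₁ := by
  unfold f₁; fun_prop

theorem contDiff_f₂ : ContDiff ℝ 1 f₂ := by
  unfold f₂; fun_prop

theorem f_eq_add (a b : ℝ) : f a b = f₁ a + f₂ b := by
  unfold f f₁ f₂; ring

theorem deriv_f_left (b y : ℝ) : deriv (fun s => f s b) y = deriv f₁ y := by
  simp_rw [f_eq_add, deriv_add_const]

theorem deriv_f_right (a y : ℝ) : deriv (fun s => f a s) y = deriv f₂ y := by
  simp_rw [f_eq_add, deriv_const_add]

theorem f_swap_sub (a c : ℝ) : f (a + c) a - f a (a + c) = c / 2 := by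
  unfold f; ring

/-- Integrated Gradients can fail average weak pairwise monotonicity for a nonzero
baseline: `f(x₁, x₂) = 4.5x₁ − x₁² + 4x₂ − x₂²` is weakly pairwise monotonic with respect
to `x₁` over `x₂` on `[0,2]²` (for `x₁ = x₂` in `[0,2]` and `c > 0` keeping the perturbed
points in `[0,2]²`), and at explicand `(2,2)` with baseline `(1,0)` one has
`IG₁((2,2),(1,0),f) = 1.5` and `IG₂((2,2),(1,0),f) = 4`, so that
`IG₁/(2 − 1) = 1.5 < 2 = IG₂/(2 − 0)`; thus the average weak pairwise monotonicity
inequality fails at an explicand with `x₁ = x₂`. Here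
`IG_i((2,2),(1,0),f) = (x_i − x'_i) · ∫_0^1 (∂f/∂x_i)(1 + t·(2−1), 0 + t·(2−0)) dt`. -/
theorem ig_fails_average_weak_pairwise_monotonicity_nonzero_baseline :
    (∀ a c : ℝ, 0 ≤ a → a ≤ 2 → 0 < c → a + c ≤ 2 → f a (a + c) ≤ f (a + c) a) ∧
    ((2 - 1 : ℝ) * ∫ t in (0:ℝ)..1,
        deriv (fun s : ℝ => f s (0 + t * (2 - 0))) (1 + t * (2 - 1))) = 1.5 ∧
    ((2 - 0 : ℝ) * ∫ t in (0:ℝ)..1,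
        deriv (fun s : ℝ => f (1 + t * (2 - 1)) s) (0 + t * (2 - 0))) = 4 ∧
    ((1.5 : ℝ) / (2 - 1) < 4 / (2 - 0)) := by
  refine ⟨fun a c _ _ hc _ => by linarith [f_swap_sub a c], ?_, ?_, by norm_num⟩
  · simp_rw [deriv_f_left, sub_mul_integral_deriv_comp_segment contDiff_f₁]
    norm_num [f₁]
  · simp_rw [deriv_f_right, sub_mul_integral_deriv_comp_segment contDiff_f₂]
    norm_num [f₂]
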